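/- Let n, b be positive integers and let B ⊆ A ⊆ 𝔽₂^{[n]×[b]} be nonempty affine subspaces with codim(B) = codim(A) + 1 and âcl(B) = âcl(A) + 1. Let T ⊆ [n] be a closure of A (a deviolator of minimum cardinality) and let y ∈ 𝔽₂^{T×[b]} satisfy A ∩ C_y ≠ ∅. Then B ∩ C_y ≠ ∅, the affine subspaces A_y = {x̃ ∈ 𝔽₂^{([n]∖T)×[b]} : the point equal to y on the blocks of T and to x̃ elsewhere lies in A} and B_y (defined analogously from B) are both safe, and codim(B_y) = codim(A_y) + 1, where codimensions of A_y and B_y are taken within 𝔽₂^{([n]∖T)×[b]}. -/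

import Mathlib

open Finset

noncomputable section

abbrev F2 : Type := ZMod 2

/-- Restriction of `x` to block `i`. -/
def blk {ι : Type*} {b : ℕ} (x : (ι × Fin b) → F2) (i : ι) : Fin b → F2 := fun j => x (i, j)

/-- The lifted gadget map `G(x)_i = g(x(i))`. -/
def liftG {n b : ℕ} (g : (Fin b → F2) → F2) (x : (Fin n × Fin b) → F2) : Fin n → F2 :=
  fun i => g (blk x i)

/-- Fourier coefficient of `h : 𝔽₂^J → 𝔽₂` at `T ⊆ J`. -/
def hatFC {J : Type*} [Fintype J] [DecidableEq J] (h : (J → F2) → F2) (T : Finset J) : ℝ :=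
  ((2 : ℝ) ^ (Fintype.card J))⁻¹ *
    ∑ x : J → F2, (-1 : ℝ) ^ ((h x).val + ∑ j ∈ T, (x j).val)

/-- A set of vectors of the lifted space (blocks indexed by `ι`) is safe if any `k`
linearly independent vectors in its span have supports meeting at least `k` blocks. -/
def IsSafeSet {ι : Type*} {b : ℕ} (Vs : Set ((ι × Fin b) → F2)) : Prop :=
  ∀ (k : ℕ) (w : Fin k → ((ι × Fin b) → F2)),
    (∀ m, w m ∈ Submodule.span F2 Vs) → LinearIndependent F2 w →
    k ≤ ({i : ι | ∃ m j, w m (i, j) ≠ 0} : Set ι).ncard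

/-- The annihilator `L(A)` of an affine subspace: all linear forms vanishing on its
direction. -/
def annih {ι : Type*} [Fintype ι] {b : ℕ}
    (A : AffineSubspace F2 ((ι × Fin b) → F2)) : Set ((ι × Fin b) → F2) :=
  {l | ∀ w ∈ A.direction, ∑ p : ι × Fin b, l p * w p = 0}

/-- A (nonempty) affine subspace is safe if its annihilator is safe. -/
def IsSafeAffine {ι : Type*} [Fintype ι] {b : ℕ}
    (A : AffineSubspace F2 ((ι × Fin b) → F2)) : Prop :=
  IsSafeSet (annih A)

/-- Codimension of an affine subspace of the lifted space. -/
def codim {ι : Type*} [Fintype ι] {b : ℕ}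
    (A : AffineSubspace F2 ((ι × Fin b) → F2)) : ℕ :=
  Fintype.card ι * b - Module.finrank F2 A.direction

/-- Standard basis vector at coordinate `p`. -/
def stdv {ι : Type*} [DecidableEq ι] {b : ℕ} (p : ι × Fin b) : (ι × Fin b) → F2 :=
  fun q => if q = p then 1 else 0

/-- A set of blocks `S` is acceptable for a subspace `W` if one can pick one coordinate
in each block of `S` so that no nonzero 𝔽₂-linear combination of the corresponding
standard basis vectors lies in `W`. -/
def AcceptableFor {ι : Type*} [DecidableEq ι] {b : ℕ}
    (W : Submodule F2 ((ι × Fin b) → F2)) (S : Finset ι) : Prop :=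
  ∃ c : ι → Fin b, ∀ T ⊆ S, T.Nonempty → (∑ s ∈ T, stdv (s, c s)) ∉ W

/-- `âcl(A)`: the maximum size of a set of blocks acceptable for the direction of `A`. -/
def acl {ι : Type*} [Fintype ι] [DecidableEq ι] {b : ℕ}
    (A : AffineSubspace F2 ((ι × Fin b) → F2)) : ℕ :=
  sSup {k | ∃ S : Finset ι, S.card = k ∧ AcceptableFor A.direction S}

/-- `v[∖T]`: restriction of `v` to the coordinates of blocks outside `T`. -/
def restrictOut {n b : ℕ} (T : Finset (Fin n)) (v : (Fin n × Fin b) → F2) :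
    ({i : Fin n // i ∉ T} × Fin b) → F2 :=
  fun p => v (p.1.1, p.2)

/-- `T` is a deviolator for `A` if `{ℓ[∖T] : ℓ ∈ L(A)}` is safe. -/
def IsDeviolator {n b : ℕ} (A : AffineSubspace F2 ((Fin n × Fin b) → F2))
    (T : Finset (Fin n)) : Prop :=
  IsSafeSet (restrictOut T '' annih A)

/-- A closure of `A` is a deviolator of minimum cardinality. -/
def IsClosure {n b : ℕ} (A : AffineSubspace F2 ((Fin n × Fin b) → F2))
    (T : Finset (Fin n)) : Prop :=
  IsDeviolator A T ∧ ∀ T', IsDeviolator A T' → T.card ≤ T'.card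

/-- `C_y`: the set of points agreeing with `y` on all coordinates of blocks in `T`. -/
def cube {n b : ℕ} (T : Finset (Fin n)) (y : ({i : Fin n // i ∈ T} × Fin b) → F2) :
    Set ((Fin n × Fin b) → F2) :=
  {x | ∀ (i : Fin n) (hi : i ∈ T) (j : Fin b), x (i, j) = y (⟨i, hi⟩, j)}

/-- The point of the lifted space equal to `y` on the blocks of `T` and to `x` elsewhere. -/
def glue {n b : ℕ} (T : Finset (Fin n)) (y : ({i : Fin n // i ∈ T} × Fin b) → F2)
    (x : ({i : Fin n // i ∉ T} × Fin b) → F2) : (Fin n × Fin b) → F2 :=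
  fun p => if h : p.1 ∈ T then y (⟨p.1, h⟩, p.2) else x (⟨p.1, h⟩, p.2)

/-!
Let `W ⊇ W'` be the directions of `A ⊇ B`. For a subspace `U` of `𝔽₂^{ι×[b]}` and a set of
blocks `X`, put `excess U X = dim (U ∩ V_X) + |X| - |X| b`, where `V_X` is the space of vectors
supported on the blocks of `X`. Counting dimensions of `U^⊥ ∩ V_X = (U + V_{Xᶜ})^⊥` shows that
`U^⊥` is safe iff `excess U` is maximal at the full set of blocks, so `T` is a deviolator of `A`
iff `Tᶜ` maximizes `excess W` among subsets of `Tᶜ`. As `excess W` is supermodular, for a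
closure `T` the set `Tᶜ` is even a global maximizer: otherwise removing a maximizer from `T`
would give a smaller deviolator. Rado's theorem for the linear matroid `𝔽₂^{ι×[b]}/W` gives
`âcl(A) = n - max excess W`.

Since `âcl(B) = âcl(A) + 1` and `dim W = dim W' + 1`, at every maximizer `X` of `excess W`
the space `W ∩ V_X` is not contained in `W'` (else `excess W'` would have the same maximum and
`âcl(B) = âcl(A)`), so there `excess W'` is exactly one less; elsewhere it is at most
`excess W`. Hence `T` is still a deviolator of `B`. At `X = Tᶜ` we get `u ∈ W ∩ V_{Tᶜ}` with
`W = W' ⊕ ⟨u⟩`: translating by a multiple of `u`, which does not touch the blocks of `T`, moves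
a point of `A ∩ C_y` into `B ∩ C_y`, and the directions of `A_y`, `B_y` are copies of
`W ∩ V_{Tᶜ}`, `W' ∩ V_{Tᶜ}`, whose dimensions differ by one.
-/

open Module Submodule

section LinearAlgebra

variable {K V : Type*} [Field K] [AddCommGroup V] [Module K V]

lemma LinearIndependent.card_le_finrank_of_forall_mem {ι : Type*} [Fintype ι] {v : ι → V}
    (hv : LinearIndependent K v) {N : Submodule K V} [FiniteDimensional K N]
    (hN : ∀ i, v i ∈ N) : Fintype.card ι ≤ finrank K N :=
  LinearIndependent.fintype_card_le_finrank <| LinearIndependent.of_comp N.subtype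
    (show LinearIndependent K (N.subtype ∘ fun i => (⟨v i, hN i⟩ : N)) from hv)

lemma finrank_map_add_finrank_inf_ker {V₂ : Type*} [AddCommGroup V₂] [Module K V₂]
    (f : V →ₗ[K] V₂) (N : Submodule K V) [FiniteDimensional K N] :
    finrank K (N.map f) + finrank K ↥(N ⊓ LinearMap.ker f) = finrank K N := by
  have h := LinearMap.finrank_range_add_finrank_ker (f.domRestrict N)
  rwa [LinearMap.range_domRestrict, LinearMap.ker_domRestrict, LinearEquiv.finrank_eq
    (equivMapOfInjective N.subtype N.injective_subtype _), map_comap_subtype] at h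

variable [FiniteDimensional K V] {U U' : Submodule K V}

lemma finrank_inf_eq_succ_of_not_le (hle : U' ≤ U) (hU : finrank K U ≤ finrank K U' + 1)
    {S : Submodule K V} (hS : ¬U ⊓ S ≤ U') :
    finrank K ↥(U ⊓ S) = finrank K ↥(U' ⊓ S) + 1 := by
  have hlt : finrank K ↥(U' ⊓ S) < finrank K ↥(U ⊓ S) :=
    finrank_lt_finrank_of_lt (lt_of_le_of_ne (inf_le_inf_right _ hle)
      fun h => hS (h ▸ inf_le_left))
  have hmeet : (U ⊓ S) ⊓ U' = U' ⊓ S := by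
    rw [inf_right_comm, inf_eq_right.2 hle]
  have hdim := finrank_sup_add_finrank_inf_eq (U ⊓ S) U'
  rw [hmeet] at hdim
  have hsup := finrank_mono (sup_le inf_le_left hle : (U ⊓ S) ⊔ U' ≤ U)
  omega

lemma sup_span_singleton_eq_of_finrank_eq_succ (hle : U' ≤ U)
    (hU : finrank K U = finrank K U' + 1) {u : V} (hu : u ∈ U) (hu' : u ∉ U') :
    U' ⊔ span K {u} = U :=
  eq_of_le_of_finrank_eq (sup_le hle ((span_singleton_le_iff_mem u U).2 hu))
    (by rw [finrank_sup_span_singleton hu', hU])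

end LinearAlgebra

lemma linearIndepOn_zmod_two_iff {ι M : Type*} [AddCommGroup M] [Module (ZMod 2) M]
    {v : ι → M} {S : Finset ι} :
    LinearIndepOn (ZMod 2) v S ↔ ∀ T ⊆ S, T.Nonempty → ∑ i ∈ T, v i ≠ 0 := by
  classical
  constructor
  · rintro h T hTS ⟨i, hi⟩ hsum
    let f : ι →₀ ZMod 2 := ∑ j ∈ T, Finsupp.single j 1
    have hf : f ∈ Finsupp.supported (ZMod 2) (ZMod 2) (S : Set ι) :=
      sum_mem fun j hj => Finsupp.single_mem_supported _ _ (hTS hj)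
    have hfi : f i = 1 := by simp [f, Finsupp.finsetSum_apply, Finsupp.single_apply, hi]
    rw [linearIndepOn_iff.1 h f hf (by simp [f, hsum])] at hfi
    exact zero_ne_one hfi
  · intro h
    by_contra hdep
    obtain ⟨f, hfS, hsum, hf0⟩ := linearDepOn_iff.1 hdep
    have hone : ∀ i ∈ f.support, f i = 1 := fun i hi => by
      have : ∀ r : ZMod 2, r ≠ 0 → r = 1 := by decide
      exact this _ (Finsupp.mem_support_iff.1 hi)
    refine h f.support (fun i hi => by simpa using (Finsupp.mem_supported _ f).1 hfS hi)
      (Finsupp.support_nonempty_iff.2 hf0) ?_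
    calc ∑ i ∈ f.support, v i = ∑ i ∈ f.support, f i • v i :=
          sum_congr rfl fun i hi => by rw [hone i hi, one_smul]
      _ = 0 := hsum

lemma AffineSubspace.direction_comap {k V₁ P₁ V₂ P₂ : Type*} [Ring k] [AddCommGroup V₁]
    [Module k V₁] [AddTorsor V₁ P₁] [AddCommGroup V₂] [Module k V₂] [AddTorsor V₂ P₂]
    (f : P₁ →ᵃ[k] P₂) (s : AffineSubspace k P₂) {x : P₁} (hx : f x ∈ s) :
    (s.comap f).direction = s.direction.comap f.linear := by
  ext v
  rw [Submodule.mem_comap]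
  constructor
  · intro hv
    have h := AffineSubspace.vadd_mem_of_mem_direction hv (AffineSubspace.mem_comap.2 hx)
    rw [AffineSubspace.mem_comap, AffineMap.map_vadd] at h
    simpa using AffineSubspace.vsub_mem_direction h hx
  · intro hv
    have h : v +ᵥ x ∈ s.comap f := by
      rw [AffineSubspace.mem_comap, AffineMap.map_vadd]
      exact AffineSubspace.vadd_mem_of_mem_direction hv hx
    simpa using AffineSubspace.vsub_mem_direction h (AffineSubspace.mem_comap.2 hx)

section DotPerp

variable {K P : Type*} [Field K] [Fintype P] [DecidableEq P]

def dotPerp (U : Submodule K (P → K)) : Submodule K (P → K) :=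
  U.dualAnnihilator.comap (dotProductEquiv K P).toLinearMap

lemma mem_dotPerp {U : Submodule K (P → K)} {l : P → K} :
    l ∈ dotPerp U ↔ ∀ w ∈ U, l ⬝ᵥ w = 0 := by
  simp [dotPerp, Submodule.mem_dualAnnihilator]

lemma finrank_dotPerp_add_finrank (U : Submodule K (P → K)) :
    finrank K (dotPerp U) + finrank K U = Fintype.card P := by
  rw [dotPerp, Submodule.comap_equiv_eq_map_symm, LinearEquiv.finrank_map_eq, add_comm,
    Subspace.finrank_add_finrank_dualAnnihilator_eq, finrank_fintype_fun_eq_card]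

lemma dotPerp_dotPerp (U : Submodule K (P → K)) : dotPerp (dotPerp U) = U := by
  have hle : U ≤ dotPerp (dotPerp U) := fun w hw =>
    mem_dotPerp.2 fun l hl => by rw [dotProduct_comm]; exact mem_dotPerp.1 hl w hw
  have h1 := finrank_dotPerp_add_finrank U
  have h2 := finrank_dotPerp_add_finrank (dotPerp U)
  exact (Submodule.eq_of_le_of_finrank_le hle (by omega)).symm

end DotPerp

section Blocks

variable {K ι : Type*} [Field K] {b : ℕ}

def blockSupported (X : Finset ι) : Submodule K ((ι × Fin b) → K) where
  carrier := {v | ∀ p : ι × Fin b, p.1 ∉ X → v p = 0}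
  add_mem' ha hb p hp := by simp [ha p hp, hb p hp]
  zero_mem' _ _ := rfl
  smul_mem' c _ ha p hp := by simp [ha p hp]

lemma mem_blockSupported {X : Finset ι} {v : (ι × Fin b) → K} :
    v ∈ blockSupported X ↔ ∀ p : ι × Fin b, p.1 ∉ X → v p = 0 := Iff.rfl

lemma blockSupported_mono {X Y : Finset ι} (h : X ⊆ Y) :
    blockSupported (K := K) (b := b) X ≤ blockSupported Y :=
  fun _ hv p hp => hv p fun hX => hp (h hX)

lemma blockSupported_inter [DecidableEq ι] (X Y : Finset ι) :
    blockSupported (K := K) (b := b) (X ∩ Y) = blockSupported X ⊓ blockSupported Y := by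
  ext v
  simp only [Submodule.mem_inf, mem_blockSupported, mem_inter, not_and_or]
  exact ⟨fun h => ⟨fun p hp => h p (.inl hp), fun p hp => h p (.inr hp)⟩,
    fun h p => (·.elim (h.1 p) (h.2 p))⟩

lemma blockSupported_eq_span [Fintype ι] [DecidableEq ι] (X : Finset ι) :
    blockSupported (K := K) (b := b) X =
      span K (Set.range fun p : ↥(X ×ˢ (univ : Finset (Fin b))) => Pi.single p.1 (1 : K)) := by
  refine le_antisymm (fun v hv => ?_) (span_le.2 ?_)
  · rw [← Finset.univ_sum_single v]
    refine sum_mem fun p _ => ?_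
    by_cases hp : p.1 ∈ X
    · rw [show Pi.single p (v p) = v p • Pi.single p (1 : K) by
        rw [← Pi.single_smul', smul_eq_mul, mul_one]]
      exact smul_mem _ _ (subset_span ⟨⟨p, mem_product.2 ⟨hp, mem_univ _⟩⟩, rfl⟩)
    · rw [mem_blockSupported.1 hv p hp, Pi.single_zero]
      exact zero_mem _
  · rintro _ ⟨⟨p, hp⟩, rfl⟩ q hq
    have : q ≠ p := fun h => hq (h ▸ (mem_product.1 hp).1)
    simp [this]

variable [Fintype ι]

lemma blockSupported_univ : blockSupported (K := K) (b := b) (univ : Finset ι) = ⊤ :=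
  eq_top_iff.2 fun _ _ p hp => absurd (mem_univ p.1) hp

lemma finrank_blockSupported (X : Finset ι) :
    finrank K (blockSupported (K := K) (b := b) X) = X.card * b := by
  classical
  have hli : LinearIndependent K
      (fun p : ↥(X ×ˢ (univ : Finset (Fin b))) => Pi.single (M := fun _ => K) p.1 (1 : K)) := by
    simpa [Function.comp_def] using (Pi.basisFun K (ι × Fin b)).linearIndependent.comp
      (Subtype.val : ↥(X ×ˢ (univ : Finset (Fin b))) → _) Subtype.val_injective
  rw [blockSupported_eq_span, finrank_span_eq_card hli, Fintype.card_coe, card_product,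
    card_univ, Fintype.card_fin]

def blockDim (U : Submodule K ((ι × Fin b) → K)) (X : Finset ι) : ℕ :=
  finrank K ↥(U ⊓ blockSupported X)

def excess (U : Submodule K ((ι × Fin b) → K)) (X : Finset ι) : ℤ :=
  blockDim U X + X.card - X.card * b

lemma blockDim_univ (U : Submodule K ((ι × Fin b) → K)) : blockDim U univ = finrank K U := by
  rw [blockDim, blockSupported_univ, inf_top_eq]

lemma blockDim_le (U : Submodule K ((ι × Fin b) → K)) (X : Finset ι) :
    blockDim U X ≤ X.card * b :=
  (finrank_mono inf_le_right).trans (finrank_blockSupported X).le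

lemma excess_empty (U : Submodule K ((ι × Fin b) → K)) : excess U ∅ = 0 := by
  have := blockDim_le U ∅
  simp_all [excess]

lemma excess_mono {U U' : Submodule K ((ι × Fin b) → K)} (h : U' ≤ U) (X : Finset ι) :
    excess U' X ≤ excess U X := by
  have : blockDim U' X ≤ blockDim U X := finrank_mono (inf_le_inf_right _ h)
  unfold excess
  omega

variable [DecidableEq ι]

lemma excess_add_excess_le (U : Submodule K ((ι × Fin b) → K)) (X Y : Finset ι) :
    excess U X + excess U Y ≤ excess U (X ∪ Y) + excess U (X ∩ Y) := by
  have hsup : (U ⊓ blockSupported X) ⊔ (U ⊓ blockSupported Y) ≤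
      U ⊓ blockSupported (b := b) (X ∪ Y) :=
    sup_le (inf_le_inf_left _ (blockSupported_mono subset_union_left))
      (inf_le_inf_left _ (blockSupported_mono subset_union_right))
  have hinf : (U ⊓ blockSupported X) ⊓ (U ⊓ blockSupported Y) =
      U ⊓ blockSupported (b := b) (X ∩ Y) := by
    rw [blockSupported_inter]
    exact (inf_inf_distrib_left _ _ _).symm
  have hdim := finrank_sup_add_finrank_inf_eq (U ⊓ blockSupported X) (U ⊓ blockSupported Y)
  rw [hinf] at hdim
  have hmono := finrank_mono hsup
  have hcard := card_union_add_card_inter X Y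
  unfold excess blockDim
  nlinarith

lemma dotPerp_inf_blockSupported (U : Submodule K ((ι × Fin b) → K)) (X : Finset ι) :
    dotPerp U ⊓ blockSupported X = dotPerp (U ⊔ blockSupported Xᶜ) := by
  ext l
  simp only [Submodule.mem_inf, mem_dotPerp, mem_blockSupported]
  constructor
  · rintro ⟨hU, hX⟩ w hw
    obtain ⟨u, hu, v, hv, rfl⟩ := Submodule.mem_sup.1 hw
    have hlv : l ⬝ᵥ v = 0 := Finset.sum_eq_zero fun p _ => by
      by_cases hp : p.1 ∈ X
      · rw [mem_blockSupported.1 hv p (by simpa using hp), mul_zero]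
      · rw [hX p hp, zero_mul]
    rw [dotProduct_add, hU u hu, hlv, add_zero]
  · intro h
    refine ⟨fun w hw => h w (mem_sup_left hw), fun p hp => ?_⟩
    have hsingle : Pi.single p (1 : K) ∈ blockSupported (b := b) Xᶜ := fun q hq => by
      have : q ≠ p := fun hqp => hq (hqp ▸ mem_compl.2 hp)
      simp [this]
    simpa using h _ (mem_sup_right hsingle)

lemma finrank_dotPerp_inf_blockSupported (M : Submodule K ((ι × Fin b) → K)) (X : Finset ι) :
    (finrank K ↥(dotPerp M ⊓ blockSupported X) : ℤ) =
      X.card * b - finrank K M + blockDim M Xᶜ := by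
  have hdotPerp := finrank_dotPerp_add_finrank (M ⊔ blockSupported (b := b) Xᶜ)
  have hsup := finrank_sup_add_finrank_inf_eq M (blockSupported (K := K) (b := b) Xᶜ)
  have hcard := card_add_card_compl X
  rw [finrank_blockSupported] at hsup
  rw [Fintype.card_prod, Fintype.card_fin, ← hcard] at hdotPerp
  rw [dotPerp_inf_blockSupported, blockDim]
  nlinarith

end Blocks

section Safe

variable {ι : Type*} [Fintype ι] {b : ℕ}

lemma isSafeSet_iff_blockDim_le (N : Submodule F2 ((ι × Fin b) → F2)) :
    IsSafeSet (N : Set ((ι × Fin b) → F2)) ↔ ∀ X : Finset ι, blockDim N X ≤ X.card := by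
  classical
  constructor
  · intro hN X
    let e := Module.finBasis F2 ↥(N ⊓ blockSupported X)
    have hsupp : {i : ι | ∃ m j, (e m : (ι × Fin b) → F2) (i, j) ≠ 0} ⊆ X := by
      rintro i ⟨m, j, hij⟩
      by_contra hi
      exact hij ((mem_inf.1 (e m).2).2 (i, j) hi)
    have hli : LinearIndependent F2 fun m => (e m : (ι × Fin b) → F2) :=
      e.linearIndependent.map' (N ⊓ blockSupported X).subtype (ker_subtype _)
    have hspan : ∀ m, (e m : (ι × Fin b) → F2) ∈ span F2 (N : Set ((ι × Fin b) → F2)) :=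
      fun m => (span_eq N).symm ▸ (mem_inf.1 (e m).2).1
    calc blockDim N X = finrank F2 ↥(N ⊓ blockSupported X) := rfl
      _ ≤ _ := hN _ _ hspan hli
      _ ≤ (X : Set ι).ncard := Set.ncard_le_ncard hsupp X.finite_toSet
      _ = X.card := Set.ncard_coe_finset X
  · intro hN k w hw hli
    set Y := {i : ι | ∃ m j, w m (i, j) ≠ 0}.toFinset
    have hmem : ∀ m, w m ∈ N ⊓ blockSupported Y := fun m => by
      refine mem_inf.2 ⟨span_eq N ▸ hw m, fun p hp => ?_⟩
      by_contra h
      exact hp (Set.mem_toFinset.2 ⟨m, p.2, h⟩)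
    calc k = Fintype.card (Fin k) := (Fintype.card_fin k).symm
      _ ≤ blockDim N Y := hli.card_le_finrank_of_forall_mem hmem
      _ ≤ Y.card := hN Y
      _ = _ := by rw [← Set.ncard_coe_finset, Set.coe_toFinset]

variable [DecidableEq ι]

lemma isSafeSet_dotPerp_iff (M : Submodule F2 ((ι × Fin b) → F2)) :
    IsSafeSet (dotPerp M : Set ((ι × Fin b) → F2)) ↔
      ∀ X : Finset ι, excess M X ≤ excess M univ := by
  rw [isSafeSet_iff_blockDim_le, compl_surjective.forall]
  refine forall_congr' fun X => ?_
  have hdim := finrank_dotPerp_inf_blockSupported M Xᶜ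
  have hcard := card_add_card_compl X
  rw [compl_compl] at hdim
  rw [excess, excess, blockDim_univ, card_univ, ← hcard, ← Int.ofNat_le]
  unfold blockDim at hdim ⊢
  constructor <;> intro h <;> push_cast at * <;> nlinarith

lemma annih_eq_dotPerp (A : AffineSubspace F2 ((ι × Fin b) → F2)) :
    annih A = dotPerp A.direction :=
  Set.ext fun _ => mem_dotPerp.symm

end Safe

section Rado

variable {Q I : Type*} [DecidableEq Q]

lemma card_update_erase_le [DecidableEq I] (A : I → Finset Q) (i : I) (z : Q) (j : I) :
    (Function.update A i ((A i).erase z) j).card ≤ (A j).card := by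
  rcases eq_or_ne j i with rfl | hj
  · rw [Function.update_self]
    exact card_erase_le
  · rw [Function.update_of_ne hj]

variable (K : Type*) [Field K] [AddCommGroup Q] [Module K Q]

def RadoCondition [Fintype I] (A : I → Finset Q) : Prop :=
  ∀ S : Finset I, S.card ≤ finrank K (span K (S.biUnion A : Set Q))

variable {K}

lemma span_biUnion_le_iff {A : I → Finset Q} {S : Finset I} {U : Submodule K Q} :
    span K (S.biUnion A : Set Q) ≤ U ↔ ∀ i ∈ S, ∀ q ∈ A i, q ∈ U := by
  simp only [span_le, Set.subset_def, coe_biUnion, Set.mem_iUnion, SetLike.mem_coe]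
  exact ⟨fun h i hi q hq => h q ⟨i, hi, hq⟩, fun h q ⟨i, hi, hq⟩ => h i hi q hq⟩

variable [Fintype I] [DecidableEq I] {A : I → Finset Q}

lemma RadoCondition.mem_of_lt_card (hA : RadoCondition K A) {i : I} {z : Q} {S : Finset I}
    (hS : finrank K (span K (S.biUnion (Function.update A i ((A i).erase z)) : Set Q)) <
      S.card) : i ∈ S := by
  by_contra hi
  rw [biUnion_congr rfl fun j hj => Function.update_of_ne (ne_of_mem_of_not_mem hj hi) _ _]
    at hS
  exact (hA S).not_gt hS

/-- If both deletions fail, at `Sx ∋ i` and `Sy ∋ i`, the spans `Ux`, `Uy` of the reduced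
families over `Sx` and `Sy` together contain `A` over `Sx ∪ Sy`, and both contain `A` over
`(Sx ∩ Sy) \ {i}`; submodularity of `dim` then contradicts Rado's condition. -/
lemma RadoCondition.erase_or_erase (hA : RadoCondition K A) {i : I} {x y : Q} (hx : x ∈ A i)
    (hy : y ∈ A i) (hxy : x ≠ y) :
    RadoCondition K (Function.update A i ((A i).erase x)) ∨
      RadoCondition K (Function.update A i ((A i).erase y)) := by
  by_contra! h
  simp only [RadoCondition, not_forall, not_le] at h
  obtain ⟨⟨Sx, hSx⟩, ⟨Sy, hSy⟩⟩ := h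
  have hix := hA.mem_of_lt_card hSx
  have hiy := hA.mem_of_lt_card hSy
  set Ux := span K (Sx.biUnion (Function.update A i ((A i).erase x)) : Set Q)
  set Uy := span K (Sy.biUnion (Function.update A i ((A i).erase y)) : Set Q)
  have hUx := span_biUnion_le_iff.1 (le_refl Ux)
  have hUy := span_biUnion_le_iff.1 (le_refl Uy)
  have hsup : span K ((insert i (Sx.erase i ∪ Sy.erase i)).biUnion A : Set Q) ≤ Ux ⊔ Uy := by
    refine span_biUnion_le_iff.2 fun j hj q hq => ?_
    rcases mem_insert.1 hj with rfl | hj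
    · by_cases hqx : q = x
      · refine mem_sup_right (hUy j hiy q ?_)
        rw [Function.update_self]
        exact mem_erase.2 ⟨hqx ▸ hxy, hq⟩
      · refine mem_sup_left (hUx j hix q ?_)
        rw [Function.update_self]
        exact mem_erase.2 ⟨hqx, hq⟩
    · rcases mem_union.1 hj with hj | hj
      · refine mem_sup_left (hUx j (mem_of_mem_erase hj) q ?_)
        rwa [Function.update_of_ne (ne_of_mem_erase hj)]
      · refine mem_sup_right (hUy j (mem_of_mem_erase hj) q ?_)
        rwa [Function.update_of_ne (ne_of_mem_erase hj)]
  have hinf : span K ((Sx.erase i ∩ Sy.erase i).biUnion A : Set Q) ≤ Ux ⊓ Uy := by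
    refine span_biUnion_le_iff.2 fun j hj q hq => ?_
    obtain ⟨hjx, hjy⟩ := mem_inter.1 hj
    exact ⟨hUx j (mem_of_mem_erase hjx) q (by rwa [Function.update_of_ne (ne_of_mem_erase hjx)]),
      hUy j (mem_of_mem_erase hjy) q (by rwa [Function.update_of_ne (ne_of_mem_erase hjy)])⟩
  have h1 := (hA _).trans (finrank_mono hsup)
  have h2 := (hA _).trans (finrank_mono hinf)
  rw [card_insert_of_notMem (by simp)] at h1
  have h3 := card_union_add_card_inter (Sx.erase i) (Sy.erase i)
  rw [card_erase_of_mem hix, card_erase_of_mem hiy] at h3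
  have h4 := finrank_sup_add_finrank_inf_eq Ux Uy
  omega

theorem RadoCondition.exists_linearIndependent (hA : RadoCondition K A) :
    ∃ x : I → Q, (∀ i, x i ∈ A i) ∧ LinearIndependent K x := by
  induction hN : ∑ i, (A i).card using Nat.strong_induction_on generalizing A with
  | _ N ih =>
  by_cases hsmall : ∀ i, (A i).card ≤ 1
  · have hone : ∀ i, ∃ a, A i = {a} := fun i => card_eq_one.1 <| le_antisymm (hsmall i) <|
      card_pos.2 <| nonempty_iff_ne_empty.2 fun h => by simpa [h] using hA {i}
    choose a ha using hone
    refine ⟨a, fun i => by simp [ha], ?_⟩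
    have hrange : Set.range a = (univ.biUnion A : Set Q) := by
      ext q
      simp [ha, eq_comm]
    rw [linearIndependent_iff_card_le_finrank_span, Set.finrank, hrange, ← card_univ]
    exact hA univ
  · simp only [not_forall, not_le] at hsmall
    obtain ⟨i, hi⟩ := hsmall
    obtain ⟨x, hx, y, hy, hxy⟩ := one_lt_card.1 hi
    have of_erase : ∀ z ∈ A i, RadoCondition K (Function.update A i ((A i).erase z)) →
        ∃ v : I → Q, (∀ j, v j ∈ A j) ∧ LinearIndependent K v := by
      intro z hz hAz
      have hlt : ∑ j, (Function.update A i ((A i).erase z) j).card < N := hN ▸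
        sum_lt_sum (fun j _ => card_update_erase_le A i z j)
          ⟨i, mem_univ i, by rw [Function.update_self]; exact card_erase_lt_of_mem hz⟩
      obtain ⟨v, hv, hli⟩ := ih _ hlt hAz rfl
      refine ⟨v, fun j => ?_, hli⟩
      rcases eq_or_ne j i with rfl | hj
      · simpa using mem_of_mem_erase (Function.update_self j _ A ▸ hv j)
      · simpa [Function.update_of_ne hj] using hv j
    exact (hA.erase_or_erase hx hy hxy).elim (of_erase x hx) (of_erase y hy)

end Rado

section AmortizedClosure

variable {ι : Type*} [DecidableEq ι] {b : ℕ}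

lemma stdv_eq_single (p : ι × Fin b) : stdv p = Pi.single p (1 : F2) := by
  ext q
  simp [stdv, Pi.single_apply]

lemma acceptableFor_iff {W : Submodule F2 ((ι × Fin b) → F2)} {S : Finset ι} :
    AcceptableFor W S ↔
      ∃ c : ι → Fin b, LinearIndepOn F2 (fun i => W.mkQ (stdv (i, c i))) S := by
  simp only [AcceptableFor, linearIndepOn_zmod_two_iff, ← map_sum]
  simp only [mkQ_apply, Quotient.mk_eq_zero, Ne]

variable [Fintype ι]

lemma AcceptableFor.card_add_excess_le {W : Submodule F2 ((ι × Fin b) → F2)} {S : Finset ι}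
    (hS : AcceptableFor W S) (X : Finset ι) : S.card + excess W X ≤ Fintype.card ι := by
  obtain ⟨c, hc⟩ := acceptableFor_iff.1 hS
  have hSX : (S ∩ X).card ≤ finrank F2 ↥((blockSupported X).map W.mkQ) := by
    have hmem : ∀ i : ↥((S ∩ X : Finset ι) : Set ι),
        W.mkQ (stdv (i.1, c i)) ∈ (blockSupported X).map W.mkQ := fun i => by
      refine mem_map_of_mem ?_
      rw [stdv_eq_single, mem_blockSupported]
      intro q hq
      have : q ≠ (i.1, c i) := fun h => hq (h ▸ (mem_inter.1 (mem_coe.1 i.2)).2)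
      simp [this]
    have := (hc.mono (coe_subset.2 inter_subset_left)).card_le_finrank_of_forall_mem hmem
    simpa only [coe_sort_coe, Fintype.card_coe] using this
  have hrank := finrank_map_add_finrank_inf_ker W.mkQ (blockSupported X)
  rw [ker_mkQ, finrank_blockSupported, inf_comm] at hrank
  have hunion := card_union_add_card_inter S X
  have huniv := card_le_univ (S ∪ X)
  unfold excess blockDim
  omega

section RadoFamily

open scoped Classical

/-- The `d` extra vectors shared by all blocks absorb a deficiency `d` in Rado's condition: an
independent transversal uses them for at most `d` blocks. -/
def blockFamily (W : Submodule F2 ((ι × Fin b) → F2)) (d : ℕ) (i : ι) :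
    Finset ((((ι × Fin b) → F2) ⧸ W) × (Fin d → F2)) :=
  univ.image (fun j => (W.mkQ (Pi.single (i, j) 1), 0)) ∪
    univ.image (fun m => (0, Pi.single m 1))

lemma radoCondition_blockFamily (W : Submodule F2 ((ι × Fin b) → F2)) (d : ℕ)
    (hW : ∀ X, excess W X ≤ d) : RadoCondition F2 (blockFamily W d) := by
  intro S
  rcases S.eq_empty_or_nonempty with rfl | ⟨i₀, hi₀⟩
  · simp
  set E := LinearMap.inr F2 (((ι × Fin b) → F2) ⧸ W) (Fin d → F2)
  set L := LinearMap.inl F2 (((ι × Fin b) → F2) ⧸ W) (Fin d → F2) ∘ₗ W.mkQ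
  have hblocks : (blockSupported S).map L ≤ span F2 (S.biUnion (blockFamily W d) : Set _) := by
    rw [blockSupported_eq_span, map_span, span_le]
    rintro _ ⟨_, ⟨⟨p, hp⟩, rfl⟩, rfl⟩
    refine subset_span (mem_coe.2 (mem_biUnion.2 ⟨p.1, (mem_product.1 hp).1, ?_⟩))
    exact mem_union_left _ (mem_image.2 ⟨p.2, mem_univ _, rfl⟩)
  have hextra : LinearMap.range E ≤ span F2 (S.biUnion (blockFamily W d) : Set _) := by
    rw [LinearMap.range_eq_map, ← (Pi.basisFun F2 (Fin d)).span_eq, map_span, span_le]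
    rintro _ ⟨_, ⟨m, rfl⟩, rfl⟩
    refine subset_span (mem_coe.2 (mem_biUnion.2 ⟨i₀, hi₀, ?_⟩))
    exact mem_union_right _ (mem_image.2 ⟨m, mem_univ _, by simp [E]⟩)
  have hdisj : (blockSupported S).map L ⊓ LinearMap.range E = ⊥ :=
    (LinearMap.disjoint_inl_inr.mono_left
      (by rw [map_comp]; exact LinearMap.map_le_range)).eq_bot
  have hL := finrank_map_add_finrank_inf_ker L (blockSupported S)
  rw [LinearMap.ker_comp, ker_inl, comap_bot, ker_mkQ, inf_comm,
    finrank_blockSupported] at hL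
  have hE : finrank F2 (LinearMap.range E) = d := by
    rw [LinearMap.finrank_range_of_inj (f := E) LinearMap.inr_injective, finrank_fin_fun]
  have hsum := finrank_sup_add_finrank_inf_eq ((blockSupported S).map L) (LinearMap.range E)
  rw [hdisj, finrank_bot, hE] at hsum
  have hmono := finrank_mono (sup_le hblocks hextra)
  have hS := hW S
  unfold excess blockDim at hS
  omega

lemma exists_acceptableFor_of_excess_le (hb : 0 < b) (W : Submodule F2 ((ι × Fin b) → F2))
    (d : ℕ) (hW : ∀ X, excess W X ≤ d) :
    ∃ S : Finset ι, AcceptableFor W S ∧ Fintype.card ι ≤ S.card + d := by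
  obtain ⟨x, hxA, hli⟩ := (radoCondition_blockFamily W d hW).exists_linearIndependent
  have hx : ∀ i, (∃ j, x i = (W.mkQ (Pi.single (i, j) 1), 0)) ∨
      ∃ m, x i = (0, Pi.single m 1) :=
    fun i => by simpa [blockFamily, eq_comm] using hxA i
  set S := univ.filter fun i => ∃ j, x i = (W.mkQ (Pi.single (i, j) 1), 0)
  have : Nonempty (Fin b) := ⟨⟨0, hb⟩⟩
  choose! c hc using fun i (hi : i ∈ S) => (mem_filter.1 hi).2
  refine ⟨S, acceptableFor_iff.2 ⟨c, ?_⟩, ?_⟩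
  · have hcomp : LinearMap.inl F2 _ (Fin d → F2) ∘
        (fun i : (S : Set ι) => W.mkQ (stdv (i.1, c i))) = x ∘ Subtype.val := by
      ext ⟨i, hi⟩ : 1
      simp [stdv_eq_single, hc i hi]
    exact LinearIndependent.of_comp _ (hcomp ▸ hli.comp _ Subtype.val_injective)
  · have hmem : ∀ i : ↥Sᶜ, x i ∈ LinearMap.range (LinearMap.inr F2 _ (Fin d → F2)) :=
      fun ⟨i, hi⟩ => ((hx i).resolve_left fun hj =>
        mem_compl.1 hi (mem_filter.2 ⟨mem_univ _, hj⟩)).elim fun m hm => ⟨_, hm.symm⟩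
    have hcompl := (hli.comp _ Subtype.val_injective).card_le_finrank_of_forall_mem hmem
    rw [Fintype.card_coe, LinearMap.finrank_range_of_inj LinearMap.inr_injective,
      finrank_fin_fun] at hcompl
    have := card_add_card_compl S
    omega

end RadoFamily

lemma acl_add_excess_eq (hb : 0 < b) (A : AffineSubspace F2 ((ι × Fin b) → F2))
    {X : Finset ι} (hX : ∀ Y, excess A.direction Y ≤ excess A.direction X) :
    (acl A : ℤ) + excess A.direction X = Fintype.card ι := by
  have hD : 0 ≤ excess A.direction X := excess_empty A.direction ▸ hX ∅
  obtain ⟨S, hS, hcard⟩ := exists_acceptableFor_of_excess_le hb A.direction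
    (excess A.direction X).toNat fun Y => (hX Y).trans (Int.self_le_toNat _)
  have hbdd : BddAbove {k | ∃ S : Finset ι, S.card = k ∧ AcceptableFor A.direction S} :=
    ⟨Fintype.card ι, fun _ ⟨S, hk, _⟩ => hk ▸ card_le_univ S⟩
  have hne : {k | ∃ S : Finset ι, S.card = k ∧ AcceptableFor A.direction S}.Nonempty :=
    ⟨S.card, S, rfl, hS⟩
  obtain ⟨S₀, hS₀card, hS₀⟩ := Nat.sSup_mem hne hbdd
  have hle := hS₀.card_add_excess_le X
  have hge : S.card ≤ acl A := le_csSup hbdd ⟨S, rfl, hS⟩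
  rw [← acl] at hS₀card
  omega

end AmortizedClosure

section Restriction

variable {n b : ℕ} (T : Finset (Fin n))

def extendByZero : (({i : Fin n // i ∉ T} × Fin b) → F2) →ₗ[F2] ((Fin n × Fin b) → F2) where
  toFun x p := if h : p.1 ∈ T then 0 else x (⟨p.1, h⟩, p.2)
  map_add' x y := by ext p; by_cases h : p.1 ∈ T <;> simp [h]
  map_smul' c x := by ext p; by_cases h : p.1 ∈ T <;> simp [h]

def restrictOutₗ : ((Fin n × Fin b) → F2) →ₗ[F2] (({i : Fin n // i ∉ T} × Fin b) → F2) :=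
  LinearMap.funLeft F2 F2 fun p => (p.1.1, p.2)

lemma restrictOutₗ_apply (v : (Fin n × Fin b) → F2) : restrictOutₗ T v = restrictOut T v := rfl

lemma restrictOut_extendByZero (x : ({i : Fin n // i ∉ T} × Fin b) → F2) :
    restrictOut T (extendByZero T x) = x := by
  ext ⟨⟨i, hi⟩, j⟩
  simp [restrictOut, extendByZero, hi]

lemma extendByZero_injective : Function.Injective (extendByZero (b := b) T) :=
  Function.LeftInverse.injective (restrictOut_extendByZero T)

lemma extendByZero_restrictOut {v : (Fin n × Fin b) → F2} (hv : v ∈ blockSupported Tᶜ) :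
    extendByZero T (restrictOut T v) = v := by
  ext p
  by_cases h : p.1 ∈ T
  · simp [extendByZero, h, hv p (by simpa using h)]
  · simp [extendByZero, restrictOut, h]

lemma glue_restrictOut {y : ({i : Fin n // i ∈ T} × Fin b) → F2} {v : (Fin n × Fin b) → F2}
    (hv : v ∈ cube T y) : glue T y (restrictOut T v) = v := by
  ext p
  by_cases h : p.1 ∈ T
  · simp [glue, h, hv p.1 h p.2]
  · simp [glue, restrictOut, h]

lemma dotProduct_extendByZero (l : (Fin n × Fin b) → F2)
    (x : ({i : Fin n // i ∉ T} × Fin b) → F2) :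
    l ⬝ᵥ extendByZero T x = restrictOut T l ⬝ᵥ x := by
  refine (Fintype.sum_of_injective (fun q : {i : Fin n // i ∉ T} × Fin b => (q.1.1, q.2))
    (fun q q' h => by simpa [Prod.ext_iff, Subtype.ext_iff] using h) _ _ ?_ ?_).symm
  · rintro ⟨i, j⟩ hp
    have hi : i ∈ T := by_contra fun hi => hp ⟨(⟨i, hi⟩, j), rfl⟩
    simp [extendByZero, hi]
  · rintro ⟨⟨i, hi⟩, j⟩
    simp [extendByZero, restrictOut, hi]

lemma map_restrictOutₗ_dotPerp (U : Submodule F2 ((Fin n × Fin b) → F2)) :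
    (dotPerp U).map (restrictOutₗ T) = dotPerp (U.comap (extendByZero T)) := by
  have h : dotPerp ((dotPerp U).map (restrictOutₗ T)) = U.comap (extendByZero T) := by
    ext x
    conv_rhs => rw [mem_comap, ← dotPerp_dotPerp U]
    rw [mem_dotPerp, mem_dotPerp]
    constructor
    · intro h l hl
      rw [dotProduct_comm, dotProduct_extendByZero, dotProduct_comm]
      exact h _ (mem_map_of_mem hl)
    · rintro h _ ⟨l, hl, rfl⟩
      rw [dotProduct_comm, restrictOutₗ_apply, ← dotProduct_extendByZero, dotProduct_comm]
      exact h l hl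
  rw [← h, dotPerp_dotPerp]

lemma restrictOut_image_annih (A : AffineSubspace F2 ((Fin n × Fin b) → F2)) :
    restrictOut T '' annih A = dotPerp (A.direction.comap (extendByZero T)) := by
  rw [← map_restrictOutₗ_dotPerp, map_coe, annih_eq_dotPerp]
  rfl

lemma map_extendByZero_comap_inf_blockSupported (U : Submodule F2 ((Fin n × Fin b) → F2))
    (X : Finset {i : Fin n // i ∉ T}) :
    (U.comap (extendByZero T) ⊓ blockSupported X).map (extendByZero T) =
      U ⊓ blockSupported (X.map (Function.Embedding.subtype _)) := by
  ext v
  simp only [Submodule.mem_map, Submodule.mem_inf, mem_comap, mem_blockSupported]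
  constructor
  · rintro ⟨x, ⟨hxU, hxX⟩, rfl⟩
    refine ⟨hxU, fun p hp => ?_⟩
    by_cases h : p.1 ∈ T
    · simp [extendByZero, h]
    · simp only [extendByZero, LinearMap.coe_mk, AddHom.coe_mk, h, dite_false]
      exact hxX _ fun hX => hp (mem_map_of_mem _ hX)
  · rintro ⟨hvU, hvX⟩
    have hv : v ∈ blockSupported Tᶜ := blockSupported_mono (fun i hi => by
      obtain ⟨i, -, rfl⟩ := mem_map.1 hi; simpa using i.2) (mem_blockSupported.2 hvX)
    refine ⟨restrictOut T v, ⟨?_, fun q hq => hvX _ fun h => hq ?_⟩,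
      extendByZero_restrictOut T hv⟩
    · rwa [extendByZero_restrictOut T hv]
    · obtain ⟨i, hi, hiq⟩ := mem_map.1 h
      rwa [← Subtype.ext hiq]

lemma blockDim_comap_extendByZero (U : Submodule F2 ((Fin n × Fin b) → F2))
    (X : Finset {i : Fin n // i ∉ T}) :
    blockDim (U.comap (extendByZero T)) X =
      blockDim U (X.map (Function.Embedding.subtype _)) := by
  rw [blockDim, blockDim, ← map_extendByZero_comap_inf_blockSupported,
    LinearEquiv.finrank_eq (equivMapOfInjective _ (extendByZero_injective T) _)]

lemma excess_comap_extendByZero (U : Submodule F2 ((Fin n × Fin b) → F2))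
    (X : Finset {i : Fin n // i ∉ T}) :
    excess (U.comap (extendByZero T)) X = excess U (X.map (Function.Embedding.subtype _)) := by
  rw [excess, excess, blockDim_comap_extendByZero, card_map]

lemma univ_map_subtype_notMem :
    (univ : Finset {i : Fin n // i ∉ T}).map (Function.Embedding.subtype _) = Tᶜ := by
  ext i
  simp

end Restriction

section Closure

variable {n b : ℕ}

lemma isDeviolator_iff (A : AffineSubspace F2 ((Fin n × Fin b) → F2)) (T : Finset (Fin n)) :
    IsDeviolator A T ↔ ∀ X ⊆ Tᶜ, excess A.direction X ≤ excess A.direction Tᶜ := by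
  rw [IsDeviolator, restrictOut_image_annih, isSafeSet_dotPerp_iff]
  simp only [excess_comap_extendByZero, univ_map_subtype_notMem]
  constructor
  · intro h X hX
    simpa [subtype_map, filter_true_of_mem fun i hi => mem_compl.1 (hX hi)] using
      h (X.subtype (· ∉ T))
  · intro h X
    refine h _ fun i hi => ?_
    obtain ⟨i, -, rfl⟩ := mem_map.1 hi
    exact mem_compl.2 i.2

lemma IsClosure.excess_le_compl {A : AffineSubspace F2 ((Fin n × Fin b) → F2)}
    {T : Finset (Fin n)} (hT : IsClosure A T) (Y : Finset (Fin n)) :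
    excess A.direction Y ≤ excess A.direction Tᶜ := by
  have hdev := (isDeviolator_iff A T).1 hT.1
  obtain ⟨M, -, hM⟩ := exists_max_image univ (excess A.direction) univ_nonempty
  have hunion : excess A.direction M ≤ excess A.direction (Tᶜ ∪ M) := by
    have := excess_add_excess_le A.direction Tᶜ M
    have := hdev (Tᶜ ∩ M) inter_subset_left
    linarith
  have hdev' : IsDeviolator A (T \ M) := (isDeviolator_iff A _).2 fun X _ => by
    rw [show (T \ M)ᶜ = Tᶜ ∪ M by ext; simp [imp_iff_not_or]]
    exact (hM X (mem_univ _)).trans hunion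
  have hTM : T \ M = T := eq_of_subset_of_card_le sdiff_subset (hT.2 _ hdev')
  have hMT : M ⊆ Tᶜ := fun i hi => mem_compl.2 fun hiT =>
    (mem_sdiff.1 (hTM.symm ▸ hiT : i ∈ T \ M)).2 hi
  exact (hM Y (mem_univ _)).trans (hdev M hMT)

end Closure

section Glue

variable {n b : ℕ} (T : Finset (Fin n)) (y : ({i : Fin n // i ∈ T} × Fin b) → F2)

def glueAffine : (({i : Fin n // i ∉ T} × Fin b) → F2) →ᵃ[F2] ((Fin n × Fin b) → F2) where
  toFun := glue T y
  linear := extendByZero T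
  map_vadd' x v := by ext p; by_cases h : p.1 ∈ T <;> simp [glue, extendByZero, h]

variable {T y} {A : AffineSubspace F2 ((Fin n × Fin b) → F2)}
  {x : ({i : Fin n // i ∉ T} × Fin b) → F2}

lemma direction_comap_glueAffine (hx : glue T y x ∈ A) :
    (A.comap (glueAffine T y)).direction = A.direction.comap (extendByZero T) :=
  AffineSubspace.direction_comap _ A hx

lemma isSafeAffine_comap_glueAffine_iff (hx : glue T y x ∈ A) :
    IsSafeAffine (A.comap (glueAffine T y)) ↔ IsDeviolator A T := by
  rw [IsSafeAffine, IsDeviolator, annih_eq_dotPerp, direction_comap_glueAffine hx,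
    restrictOut_image_annih]

lemma codim_comap_glueAffine (hx : glue T y x ∈ A) :
    codim (A.comap (glueAffine T y)) = Tᶜ.card * b - blockDim A.direction Tᶜ := by
  rw [codim, direction_comap_glueAffine hx, ← blockDim_univ, blockDim_comap_extendByZero,
    univ_map_subtype_notMem]
  simp [card_compl]

end Glue

section CodimOne

variable {n b : ℕ} {A B : AffineSubspace F2 ((Fin n × Fin b) → F2)}

lemma finrank_direction_eq_succ_of_codim_eq_succ (h : codim B = codim A + 1) :
    finrank F2 A.direction = finrank F2 B.direction + 1 := by
  have hA := Submodule.finrank_le A.direction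
  rw [finrank_fintype_fun_eq_card, Fintype.card_prod, Fintype.card_fin, Fintype.card_fin] at hA
  rw [codim, codim, Fintype.card_fin] at h
  omega

lemma not_inf_blockSupported_le_of_acl_eq_succ (hb : 0 < b) (hBA : B ≤ A)
    (hacl : acl B = acl A + 1) {X : Finset (Fin n)}
    (hX : ∀ Y, excess A.direction Y ≤ excess A.direction X) :
    ¬A.direction ⊓ blockSupported X ≤ B.direction := by
  intro h
  have hdir := AffineSubspace.direction_le hBA
  have heq : excess B.direction X = excess A.direction X := by
    rw [excess, excess, blockDim, blockDim,
      le_antisymm (inf_le_inf_right _ hdir) (le_inf h inf_le_right)]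
  have hA := acl_add_excess_eq hb A hX
  have hB := acl_add_excess_eq hb B (X := X) fun Y => heq ▸ (excess_mono hdir Y).trans (hX Y)
  omega

lemma blockDim_eq_succ_of_acl_eq_succ (hb : 0 < b) (hBA : B ≤ A)
    (hfin : finrank F2 A.direction = finrank F2 B.direction + 1) (hacl : acl B = acl A + 1)
    {X : Finset (Fin n)} (hX : ∀ Y, excess A.direction Y ≤ excess A.direction X) :
    blockDim A.direction X = blockDim B.direction X + 1 :=
  finrank_inf_eq_succ_of_not_le (AffineSubspace.direction_le hBA) hfin.le
    (not_inf_blockSupported_le_of_acl_eq_succ hb hBA hacl hX)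

lemma IsClosure.isDeviolator_of_acl_eq_succ (hb : 0 < b) (hBA : B ≤ A)
    (hfin : finrank F2 A.direction = finrank F2 B.direction + 1) (hacl : acl B = acl A + 1)
    {T : Finset (Fin n)} (hT : IsClosure A T) : IsDeviolator B T := by
  have hdrop : ∀ X, excess A.direction X = excess A.direction Tᶜ →
      excess B.direction X = excess A.direction X - 1 := fun X hX => by
    have := blockDim_eq_succ_of_acl_eq_succ hb hBA hfin hacl (X := X)
      fun Y => hX ▸ hT.excess_le_compl Y
    rw [excess, excess, this]
    push_cast
    ring
  refine (isDeviolator_iff B T).2 fun X _ => ?_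
  rw [hdrop Tᶜ rfl]
  by_cases hX : excess A.direction X = excess A.direction Tᶜ
  · rw [hdrop X hX, hX]
  · have := hT.excess_le_compl X
    have := excess_mono (AffineSubspace.direction_le hBA) X
    omega

lemma inter_cube_nonempty_of_sup_span {T : Finset (Fin n)}
    {y : ({i : Fin n // i ∈ T} × Fin b) → F2} (hBA : B ≤ A)
    (hB : (B : Set ((Fin n × Fin b) → F2)).Nonempty) {u : (Fin n × Fin b) → F2}
    (hu : u ∈ blockSupported Tᶜ) (hAB : B.direction ⊔ span F2 {u} = A.direction)
    (hA : ((A : Set ((Fin n × Fin b) → F2)) ∩ cube T y).Nonempty) :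
    ((B : Set ((Fin n × Fin b) → F2)) ∩ cube T y).Nonempty := by
  obtain ⟨a, haA, hay⟩ := hA
  obtain ⟨b₀, hb₀⟩ := hB
  have hab : a -ᵥ b₀ ∈ B.direction ⊔ span F2 {u} :=
    hAB ▸ AffineSubspace.vsub_mem_direction haA (hBA hb₀)
  obtain ⟨w, hw, v, hv, hsum⟩ := mem_sup.1 hab
  obtain ⟨c, rfl⟩ := mem_span_singleton.1 hv
  refine ⟨w +ᵥ b₀, AffineSubspace.vadd_mem_of_mem_direction hw hb₀, fun i hi j => ?_⟩
  have hpt : w +ᵥ b₀ = a - c • u := by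
    rw [vsub_eq_sub] at hsum
    rw [vadd_eq_add, eq_sub_iff_add_eq, add_right_comm, hsum, sub_add_cancel]
  rw [hpt, Pi.sub_apply, Pi.smul_apply, hu (i, j) (by simpa using hi), smul_zero, sub_zero]
  exact hay i hi j

end CodimOne

theorem stmt18_general {n b : ℕ} (hb : 0 < b)
    (A B : AffineSubspace F2 ((Fin n × Fin b) → F2)) (hBA : B ≤ A)
    (hBne : (B : Set ((Fin n × Fin b) → F2)).Nonempty)
    (hcodim : codim B = codim A + 1)
    (hacl : acl B = acl A + 1)
    (T : Finset (Fin n)) (hT : IsClosure A T)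
    (y : ({i : Fin n // i ∈ T} × Fin b) → F2)
    (hy : ((A : Set ((Fin n × Fin b) → F2)) ∩ cube T y).Nonempty) :
    ((B : Set ((Fin n × Fin b) → F2)) ∩ cube T y).Nonempty ∧
    ∃ (A' B' : AffineSubspace F2 (({i : Fin n // i ∉ T} × Fin b) → F2)),
      (A' : Set (({i : Fin n // i ∉ T} × Fin b) → F2))
          = {x | glue T y x ∈ A} ∧
      (B' : Set (({i : Fin n // i ∉ T} × Fin b) → F2))
          = {x | glue T y x ∈ B} ∧
      IsSafeAffine A' ∧ IsSafeAffine B' ∧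
      codim B' = codim A' + 1 := by
  have hfin := finrank_direction_eq_succ_of_codim_eq_succ hcodim
  obtain ⟨u, hu, huB⟩ := SetLike.not_le_iff_exists.1 <|
    not_inf_blockSupported_le_of_acl_eq_succ hb hBA hacl hT.excess_le_compl
  have hBy := inter_cube_nonempty_of_sup_span hBA hBne (mem_inf.1 hu).2
    (sup_span_singleton_eq_of_finrank_eq_succ (AffineSubspace.direction_le hBA) hfin
      (mem_inf.1 hu).1 huB) hy
  obtain ⟨a, haA, hay⟩ := hy
  obtain ⟨b', hb'B, hb'y⟩ := hBy
  have haA' : glue T y (restrictOut T a) ∈ A := (glue_restrictOut T hay).symm ▸ haA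
  have hb'B' : glue T y (restrictOut T b') ∈ B := (glue_restrictOut T hb'y).symm ▸ hb'B
  refine ⟨⟨b', hb'B, hb'y⟩, A.comap (glueAffine T y), B.comap (glueAffine T y), rfl, rfl,
    (isSafeAffine_comap_glueAffine_iff haA').2 hT.1,
    (isSafeAffine_comap_glueAffine_iff hb'B').2 (hT.isDeviolator_of_acl_eq_succ hb hBA hfin hacl),
    ?_⟩
  rw [codim_comap_glueAffine haA', codim_comap_glueAffine hb'B']
  have hsucc := blockDim_eq_succ_of_acl_eq_succ hb hBA hfin hacl hT.excess_le_compl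
  have hle := blockDim_le A.direction Tᶜ
  omega

/-- if `codim(B) = codim(A) + 1` and `âcl(B) = âcl(A) + 1`, then for any
extendable closure assignment `y` of `A`, the restrictions `A_y` and `B_y` are safe
affine subspaces with `codim(B_y) = codim(A_y) + 1` (Corollary `both_are_nice`). -/
theorem stmt18 {n b : ℕ} (hn : 0 < n) (hb : 0 < b)
    (A B : AffineSubspace F2 ((Fin n × Fin b) → F2)) (hBA : B ≤ A)
    (hAne : (A : Set ((Fin n × Fin b) → F2)).Nonempty)
    (hBne : (B : Set ((Fin n × Fin b) → F2)).Nonempty)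
    (hcodim : codim B = codim A + 1)
    (hacl : acl B = acl A + 1)
    (T : Finset (Fin n)) (hT : IsClosure A T)
    (y : ({i : Fin n // i ∈ T} × Fin b) → F2)
    (hy : ((A : Set ((Fin n × Fin b) → F2)) ∩ cube T y).Nonempty) :
    ((B : Set ((Fin n × Fin b) → F2)) ∩ cube T y).Nonempty ∧
    ∃ (A' B' : AffineSubspace F2 (({i : Fin n // i ∉ T} × Fin b) → F2)),
      (A' : Set (({i : Fin n // i ∉ T} × Fin b) → F2))
          = {x | glue T y x ∈ A} ∧
      (B' : Set (({i : Fin n // i ∉ T} × Fin b) → F2))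
          = {x | glue T y x ∈ B} ∧
      IsSafeAffine A' ∧ IsSafeAffine B' ∧
      codim B' = codim A' + 1 :=
  stmt18_general hb A B hBA hBne hcodim hacl T hT y hy
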